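/- (Claim 1b.) In the noise-free setting under Assumption 1, let A ⊆ A† satisfy J_{λ,3} ⊆ A, let d ∈ ℝ^p have |d_i| = λ for all i ∈ A, let x ∈ ℝ^p be given by x_i = 0 for i ∉ A and x_A = (Ψ_AᵗΨ_A)⁻¹(Ψ_Aᵗ y − d_A), set d_i = Ψ_iᵗ(y − Ψ_A x_A) for i ∉ A, and define A' = {i : |x_i + d_i| > λ}. Then either J_{λ,2} ⊆ A, or max{|x†_i| : i ∉ A'} < max{|x†_i| : i ∉ A}. -/

import Mathlib

open Matrix

/-- The submatrix `Ψ_A` of `Ψ` consisting of the columns indexed by `A`. -/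
def colSub {n p : ℕ} (Ψ : Matrix (Fin n) (Fin p) ℝ) (A : Finset (Fin p)) :
    Matrix (Fin n) {i // i ∈ A} ℝ :=
  Matrix.of fun i j => Ψ i j.1

/-- `Ψ` satisfies the restricted isometry property of order `k` with constant `δ`:
`(1 − δ)‖x‖₂² ≤ ‖Ψx‖₂² ≤ (1 + δ)‖x‖₂²` for all `x` with at most `k` nonzero entries. -/
def HasRIP {n p : ℕ} (Ψ : Matrix (Fin n) (Fin p) ℝ) (k : ℕ) (δ : ℝ) : Prop :=
  ∀ x : Fin p → ℝ, (Finset.univ.filter (fun i => x i ≠ 0)).card ≤ k →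
    (1 - δ) * (∑ i, x i ^ 2) ≤ ∑ j, (Ψ *ᵥ x) j ^ 2 ∧
      ∑ j, (Ψ *ᵥ x) j ^ 2 ≤ (1 + δ) * (∑ i, x i ^ 2)

open Finset

/-!
Put `E = x† - x` and `s = √T`. The least-squares equations on `A` and the definition of `d`
off `A` combine to `d = ΨᵀΨE`, and `E` is supported on `A†`. Splitting `E = E_A + E_{Aᶜ}`,
RIP and restricted orthogonality give `(1 - δ)‖E_A‖ ≤ λ√|A| + δ‖E_{Aᶜ}‖`, while `|Eᵢ| < 3λ`
off `A`; with `δ(4s + 1) ≤ 1` this yields `‖E‖² ≤ λ²(10s² + s/2 + 5/8)`.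

On the other hand `dᵢ = ‖Ψeᵢ‖² Eᵢ + ⟪Ψeᵢ, Ψ(E - Eᵢeᵢ)⟫`, and the last term is at most
`δ‖E - Eᵢeᵢ‖`. So an index with `|x†ᵢ| ≥ 2λ` and `|xᵢ + dᵢ| ≤ λ` would force
`‖E - Eᵢeᵢ‖ ≥ λ(4s - 1)`, which exceeds the bound above. Hence every index outside `A'` has
`|x†ᵢ| < 2λ`, whereas an index of `J_{λ,2} \ A` lies outside `A` and has `|x†ᵢ| ≥ 2λ`.
-/

theorem dotProduct_le_sqrt_mul_sqrt {ι : Type*} [Fintype ι] (u v : ι → ℝ) :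
    u ⬝ᵥ v ≤ √(u ⬝ᵥ u) * √(v ⬝ᵥ v) := by
  simpa only [dotProduct, sq] using Real.sum_mul_le_sqrt_mul_sqrt univ u v

theorem dotProduct_self_le_of_support_subset {ι : Type*} [Fintype ι] {T : Finset ι}
    {v : ι → ℝ} (hv : ∀ i ∉ T, v i = 0) {μ : ℝ} (hμ : ∀ i ∈ T, |v i| ≤ μ) :
    v ⬝ᵥ v ≤ #T * μ ^ 2 := by
  calc v ⬝ᵥ v = ∑ i ∈ T, v i ^ 2 := by
        rw [dotProduct, ← sum_subset (subset_univ T) fun i _ hi => by simp [hv i hi]]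
        simp only [sq]
    _ ≤ #T • μ ^ 2 := sum_le_card_nsmul _ _ _ fun i hi => by
        rw [← sq_abs]
        exact pow_le_pow_left₀ (abs_nonneg _) (hμ i hi) 2
    _ = #T * μ ^ 2 := nsmul_eq_mul _ _

theorem dotProduct_self_eq_sq_add_update {ι : Type*} [Fintype ι] [DecidableEq ι]
    (v : ι → ℝ) (i : ι) :
    v ⬝ᵥ v = v i ^ 2 + Function.update v i 0 ⬝ᵥ Function.update v i 0 := by
  have hterm (j : ι) :
      v j * v j = Function.update v i 0 j * Function.update v i 0 j +
        if j = i then v i ^ 2 else 0 := by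
    by_cases hj : j = i <;> simp [hj, sq]
  simp only [dotProduct, hterm, sum_add_distrib, sum_ite_eq', mem_univ, if_true]
  ring

theorem dotProduct_transpose_mulVec_mulVec {n p : ℕ} (Ψ : Matrix (Fin n) (Fin p) ℝ)
    (w v : Fin p → ℝ) : w ⬝ᵥ (Ψᵀ *ᵥ (Ψ *ᵥ v)) = (Ψ *ᵥ w) ⬝ᵥ (Ψ *ᵥ v) := by
  rw [dotProduct_mulVec, vecMul_transpose]

theorem colSub_mulVec_of_support_subset {n p : ℕ} (Ψ : Matrix (Fin n) (Fin p) ℝ)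
    {A : Finset (Fin p)} {x : Fin p → ℝ} (hx : ∀ i ∉ A, x i = 0) :
    colSub Ψ A *ᵥ (fun j : {i // i ∈ A} => x j.1) = Ψ *ᵥ x := by
  funext r
  simp only [mulVec, dotProduct, colSub, of_apply]
  rw [sum_coe_sort A (fun i => Ψ r i * x i)]
  exact sum_subset (subset_univ A) fun i _ hi => by rw [hx i hi, mul_zero]

theorem eq_transpose_mulVec_residual {n p : ℕ} {Ψ : Matrix (Fin n) (Fin p) ℝ}
    {A : Finset (Fin p)} {y : Fin n → ℝ} {d x : Fin p → ℝ}
    (hG : IsUnit ((colSub Ψ A)ᵀ * colSub Ψ A).det) (hxI : ∀ i ∉ A, x i = 0)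
    (hxA : (fun j : {i // i ∈ A} => x j.1) =
      ((colSub Ψ A)ᵀ * colSub Ψ A)⁻¹ *ᵥ ((colSub Ψ A)ᵀ *ᵥ y - fun j => d j.1))
    (hdI : ∀ i ∉ A, d i = (Ψᵀ *ᵥ (y - colSub Ψ A *ᵥ fun j => x j.1)) i) :
    d = Ψᵀ *ᵥ (y - Ψ *ᵥ x) := by
  rw [colSub_mulVec_of_support_subset Ψ hxI] at hdI
  have hnormal : (colSub Ψ A)ᵀ *ᵥ (y - Ψ *ᵥ x) = fun j => d j.1 := by
    rw [← colSub_mulVec_of_support_subset Ψ hxI, mulVec_sub, mulVec_mulVec, hxA, mulVec_mulVec,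
      mul_nonsing_inv _ hG, one_mulVec, sub_sub_cancel]
  funext i
  by_cases hi : i ∈ A
  · exact (congrFun hnormal ⟨i, hi⟩).symm
  · exact hdI i hi

/-- Here `F = ‖E_A‖`, `b = ‖E_{Aᶜ}‖`, `α² = |A|` and `κ² = |S \ A|`. Multiplying by `4s + 1`
gives `4sF ≤ (4s + 1)λα + b`, and Cauchy–Schwarz turns this into `F² ≤ λ²(s² + s/2 + 5/8)`. -/
theorem sq_add_sq_le_of_one_sub_mul_le {F b α κ s lam δ : ℝ} (hF : 0 ≤ F) (hb : 0 ≤ b)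
    (hκ : 0 ≤ κ) (hs : 0 < s) (hs2 : s ^ 2 = α ^ 2 + κ ^ 2) (hlam : 0 ≤ lam)
    (hδ : δ * (4 * s + 1) ≤ 1) (hFb : (1 - δ) * F ≤ lam * α + δ * b)
    (hbκ : b ^ 2 ≤ 9 * lam ^ 2 * κ ^ 2) :
    F ^ 2 + b ^ 2 ≤ lam ^ 2 * (10 * s ^ 2 + s / 2 + 5 / 8) := by
  have hδ' : 0 ≤ 1 - δ * (4 * s + 1) := sub_nonneg.2 hδ
  have h4sF : 4 * s * F ≤ (4 * s + 1) * lam * α + b := by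
    nlinarith [mul_le_mul_of_nonneg_left hFb (by positivity : (0 : ℝ) ≤ 4 * s + 1),
      mul_nonneg hδ' hF, mul_nonneg hδ' hb]
  have hb' : b ≤ 3 * lam * κ :=
    (pow_le_pow_iff_left₀ hb (by positivity) two_ne_zero).1 (by linarith)
  have hF2 : 16 * s ^ 2 * F ^ 2 ≤ 16 * s ^ 2 * (lam ^ 2 * (s ^ 2 + s / 2 + 5 / 8)) :=
    calc 16 * s ^ 2 * F ^ 2 = (4 * s * F) ^ 2 := by ring
      _ ≤ ((4 * s + 1) * lam * α + 3 * lam * κ) ^ 2 :=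
        pow_le_pow_left₀ (by positivity) (by linarith) 2
      _ ≤ ((4 * s + 1) ^ 2 + 9) * lam ^ 2 * (α ^ 2 + κ ^ 2) := by
        nlinarith [sq_nonneg (lam * (3 * α - (4 * s + 1) * κ))]
      _ = 16 * s ^ 2 * (lam ^ 2 * (s ^ 2 + s / 2 + 5 / 8)) := by rw [← hs2]; ring
  have hκs : κ ^ 2 ≤ s ^ 2 := by nlinarith
  nlinarith [le_of_mul_le_mul_left hF2 (by positivity), mul_le_mul_of_nonneg_left hκs
    (by positivity : (0 : ℝ) ≤ 9 * lam ^ 2)]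

/-- Here `xd`, `xi`, `di` stand for `x†ᵢ`, `xᵢ`, `dᵢ`, and `R` for the norm of the error
`x† - x` off `i`. -/
theorem lam_mul_one_sub_two_mul_le {xd xi di c δ R lam : ℝ} (hδ0 : 0 ≤ δ) (hδ1 : δ ≤ 1)
    (hc : |c - 1| ≤ δ) (hdi : |di - c * (xd - xi)| ≤ δ * R) (hlarge : 2 * lam ≤ |xd|)
    (hsmall : |xi + di| ≤ lam) (hdi_le : |di| ≤ lam) :
    lam * (1 - 2 * δ) ≤ δ * R := by
  set e := xd - xi
  have hc1 : 1 - δ ≤ c := by linarith [(abs_le.1 hc).1]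
  have he : |e| * (1 - δ) ≤ lam + δ * R :=
    calc |e| * (1 - δ) ≤ |e| * c := mul_le_mul_of_nonneg_left hc1 (abs_nonneg e)
      _ = |di - (di - c * e)| := by
        rw [sub_sub_cancel, abs_mul, abs_of_nonneg (by linarith : 0 ≤ c), mul_comm]
      _ ≤ |di| + |di - c * e| := abs_sub _ _
      _ ≤ lam + δ * R := add_le_add hdi_le hdi
  have hxd : |xd| ≤ lam + δ * |e| + δ * R :=
    calc |xd| = |(xi + di) - ((c - 1) * e + (di - c * e))| := by congr 1; ring
      _ ≤ |xi + di| + (|c - 1| * |e| + |di - c * e|) := by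
        refine (abs_sub _ _).trans (add_le_add_right ((abs_add_le _ _).trans ?_) _)
        rw [abs_mul]
      _ ≤ lam + δ * |e| + δ * R := by
        nlinarith [mul_le_mul_of_nonneg_right hc (abs_nonneg e)]
  nlinarith [mul_le_mul_of_nonneg_left he hδ0, mul_le_mul_of_nonneg_left
    (show lam ≤ δ * |e| + δ * R by linarith) (sub_nonneg.2 hδ1)]

namespace HasRIP

variable {n p k : ℕ} {Ψ : Matrix (Fin n) (Fin p) ℝ} {δ : ℝ} {S : Finset (Fin p)}

theorem bounds_of_support_subset (h : HasRIP Ψ k δ) (hS : #S ≤ k) {x : Fin p → ℝ}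
    (hx : ∀ i ∉ S, x i = 0) :
    (1 - δ) * (x ⬝ᵥ x) ≤ (Ψ *ᵥ x) ⬝ᵥ (Ψ *ᵥ x) ∧
      (Ψ *ᵥ x) ⬝ᵥ (Ψ *ᵥ x) ≤ (1 + δ) * (x ⬝ᵥ x) := by
  have hsub : ({i | x i ≠ 0} : Finset (Fin p)) ⊆ S := fun i hi =>
    by_contra fun hiS => (mem_filter.1 hi).2 (hx i hiS)
  have hcard : #{i | x i ≠ 0} ≤ k := (card_le_card hsub).trans hS
  simpa only [dotProduct, sq] using h x hcard

/-- Restricted orthogonality: the polarization identity for `V • u ± U • v`, whose squared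
norms are both `2 U² V²`, turns the two RIP bounds into a bound on `⟪Ψ u, Ψ v⟫`. -/
theorem abs_dotProduct_mulVec_le (h : HasRIP Ψ k δ) (hS : #S ≤ k) {u v : Fin p → ℝ}
    (hu : ∀ i ∉ S, u i = 0) (hv : ∀ i ∉ S, v i = 0) (huv : u ⬝ᵥ v = 0) :
    |(Ψ *ᵥ u) ⬝ᵥ (Ψ *ᵥ v)| ≤ δ * √(u ⬝ᵥ u) * √(v ⬝ᵥ v) := by
  have hU2 := Real.sq_sqrt (by simpa using dotProduct_self_star_nonneg u : 0 ≤ u ⬝ᵥ u)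
  have hV2 := Real.sq_sqrt (by simpa using dotProduct_self_star_nonneg v : 0 ≤ v ⬝ᵥ v)
  have hU0 := Real.sqrt_nonneg (u ⬝ᵥ u)
  have hV0 := Real.sqrt_nonneg (v ⬝ᵥ v)
  generalize √(u ⬝ᵥ u) = U at hU2 hU0 ⊢
  generalize √(v ⬝ᵥ v) = V at hV2 hV0 ⊢
  rcases hU0.eq_or_lt with rfl | hU
  · simp [dotProduct_self_eq_zero.1 (by rw [← hU2]; ring : u ⬝ᵥ u = 0)]
  rcases hV0.eq_or_lt with rfl | hV
  · simp [dotProduct_self_eq_zero.1 (by rw [← hV2]; ring : v ⬝ᵥ v = 0)]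
  have polar (t : ℝ) :
      (Ψ *ᵥ (V • u + t • v)) ⬝ᵥ (Ψ *ᵥ (V • u + t • v)) =
        V ^ 2 * ((Ψ *ᵥ u) ⬝ᵥ (Ψ *ᵥ u)) + 2 * V * t * ((Ψ *ᵥ u) ⬝ᵥ (Ψ *ᵥ v)) +
          t ^ 2 * ((Ψ *ᵥ v) ⬝ᵥ (Ψ *ᵥ v)) := by
    simp only [mulVec_add, mulVec_smul, add_dotProduct, dotProduct_add, smul_dotProduct,
      dotProduct_smul, smul_eq_mul, dotProduct_comm (Ψ *ᵥ v) (Ψ *ᵥ u)]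
    ring
  have hnorm (t : ℝ) (ht : t ^ 2 = U ^ 2) :
      (V • u + t • v) ⬝ᵥ (V • u + t • v) = 2 * U ^ 2 * V ^ 2 := by
    simp only [add_dotProduct, dotProduct_add, smul_dotProduct, dotProduct_smul, smul_eq_mul,
      dotProduct_comm v u, huv, ← hU2, ← hV2]
    linear_combination V ^ 2 * ht
  have hsupp (t : ℝ) : ∀ i ∉ S, (V • u + t • v) i = 0 := fun i hi => by
    simp [hu i hi, hv i hi]
  obtain ⟨hplus₁, hplus₂⟩ := h.bounds_of_support_subset hS (hsupp U)
  obtain ⟨hminus₁, hminus₂⟩ := h.bounds_of_support_subset hS (hsupp (-U))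
  rw [polar, hnorm U rfl] at hplus₁ hplus₂
  rw [polar, hnorm (-U) (by ring)] at hminus₁ hminus₂
  have hUV := mul_pos hU hV
  rw [abs_le]
  constructor
  · refine le_of_mul_le_mul_left ?_ hUV
    linarith
  · refine le_of_mul_le_mul_left ?_ hUV
    linarith

theorem mulVec_colSub_injective (h : HasRIP Ψ k δ) (hδ : δ < 1) {A : Finset (Fin p)}
    (hA : #A ≤ k) :
    Function.Injective (colSub Ψ A).mulVec := by
  intro z₁ z₂ hz
  set w : Fin p → ℝ := fun i => if hi : i ∈ A then (z₁ - z₂) ⟨i, hi⟩ else 0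
  have hw : ∀ i ∉ A, w i = 0 := fun i hi => dif_neg hi
  have hwA : (fun j : {i // i ∈ A} => w j.1) = z₁ - z₂ := funext fun j => dif_pos j.2
  have hΨw : Ψ *ᵥ w = 0 := by
    rw [← colSub_mulVec_of_support_subset Ψ hw, hwA, mulVec_sub, hz, sub_self]
  have hww : w ⬝ᵥ w ≤ 0 := by
    have := (h.bounds_of_support_subset hA hw).1
    rw [hΨw, dotProduct_zero] at this
    nlinarith
  have hw0 : w = 0 := dotProduct_self_eq_zero.1 (le_antisymm hww (by
    simpa using dotProduct_self_star_nonneg w))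
  rw [← sub_eq_zero, ← hwA, hw0]
  rfl

theorem isUnit_det_gram (h : HasRIP Ψ k δ) (hδ : δ < 1) {A : Finset (Fin p)}
    (hA : #A ≤ k) :
    IsUnit ((colSub Ψ A)ᵀ * colSub Ψ A).det := by
  have hG := PosDef.conjTranspose_mul_self _ (h.mulVec_colSub_injective hδ hA)
  rw [conjTranspose_eq_transpose_of_trivial] at hG
  exact (isUnit_iff_isUnit_det _).1 hG.isUnit

/-- The witness is `c = ‖Ψeᵢ‖²`; the error is the restricted orthogonality of `eᵢ` and `E` with
its `i`-th entry removed. -/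
theorem exists_abs_transpose_mulVec_mulVec_sub_le (h : HasRIP Ψ k δ) {i : Fin p}
    (hS : #(insert i S) ≤ k) {E : Fin p → ℝ} (hE : ∀ j ∉ S, E j = 0) :
    ∃ c, |c - 1| ≤ δ ∧ |(Ψᵀ *ᵥ (Ψ *ᵥ E)) i - c * E i| ≤
      δ * √(Function.update E i 0 ⬝ᵥ Function.update E i 0) := by
  set e : Fin p → ℝ := Pi.single i 1
  set E' := Function.update E i 0
  have he : ∀ j ∉ insert i S, e j = 0 := fun j hj =>
    Pi.single_eq_of_ne (ne_of_mem_of_not_mem (mem_insert_self i S) hj).symm 1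
  have hE' : ∀ j ∉ insert i S, E' j = 0 := fun j hj => by
    rw [mem_insert, not_or] at hj
    simp [E', hj.1, hE j hj.2]
  have hee : e ⬝ᵥ e = 1 := by simp [e]
  refine ⟨(Ψ *ᵥ e) ⬝ᵥ (Ψ *ᵥ e), ?_, ?_⟩
  · have := h.bounds_of_support_subset hS he
    rw [hee] at this
    exact abs_sub_le_iff.2 ⟨by linarith, by linarith⟩
  · have hsplit : E = E i • e + E' := by
      ext j
      by_cases hj : j = i <;> simp [e, E', hj]
    have hdi : (Ψᵀ *ᵥ (Ψ *ᵥ E)) i =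
        E i * ((Ψ *ᵥ e) ⬝ᵥ (Ψ *ᵥ e)) + (Ψ *ᵥ e) ⬝ᵥ (Ψ *ᵥ E') := by
      rw [← one_mul ((Ψᵀ *ᵥ (Ψ *ᵥ E)) i), ← single_dotProduct,
        dotProduct_transpose_mulVec_mulVec]
      conv_lhs => rw [hsplit]
      simp only [mulVec_add, mulVec_smul, dotProduct_add, dotProduct_smul, smul_eq_mul]
      ring
    have horth : e ⬝ᵥ E' = 0 := by simp [e, E']
    have hro := h.abs_dotProduct_mulVec_le hS he hE' horth
    rw [hee, Real.sqrt_one, mul_one] at hro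
    rwa [hdi, mul_comm (E i), add_sub_cancel_left]

theorem one_sub_mul_sqrt_indicator_le (h : HasRIP Ψ k δ) (hδ : 0 ≤ δ) (hS : #S ≤ k)
    {E : Fin p → ℝ} (hE : ∀ i ∉ S, E i = 0) (A : Finset (Fin p)) {lam : ℝ} (hlam : 0 ≤ lam)
    (hdA : ∀ i ∈ A, |(Ψᵀ *ᵥ (Ψ *ᵥ E)) i| ≤ lam) :
    (1 - δ) * √((A : Set (Fin p)).indicator E ⬝ᵥ (A : Set (Fin p)).indicator E) ≤
      lam * √(#A : ℝ) +
        δ * √((A : Set (Fin p))ᶜ.indicator E ⬝ᵥ (A : Set (Fin p))ᶜ.indicator E) := by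
  set EA := (A : Set (Fin p)).indicator E
  set EB := (A : Set (Fin p))ᶜ.indicator E
  set d := Ψᵀ *ᵥ (Ψ *ᵥ E)
  set dA := (A : Set (Fin p)).indicator d
  have hEA : ∀ i ∉ S, EA i = 0 := fun i hi => by simp [EA, Set.indicator_apply, hE i hi]
  have hEB : ∀ i ∉ S, EB i = 0 := fun i hi => by simp [EB, Set.indicator_apply, hE i hi]
  have horth : EA ⬝ᵥ EB = 0 :=
    sum_eq_zero fun i _ => by by_cases hi : i ∈ A <;> simp [EA, EB, hi]
  have hdA_eq : EA ⬝ᵥ d = EA ⬝ᵥ dA :=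
    sum_congr rfl fun i _ => by by_cases hi : i ∈ A <;> simp [EA, dA, hi]
  have hdA_le : √(dA ⬝ᵥ dA) ≤ lam * √(#A : ℝ) := by
    have := dotProduct_self_le_of_support_subset (T := A) (v := dA)
      (fun i hi => by simp [dA, hi]) (μ := lam) fun i hi => by simpa [dA, hi] using hdA i hi
    calc √(dA ⬝ᵥ dA) ≤ √(#A * lam ^ 2) := Real.sqrt_le_sqrt this
      _ = lam * √(#A : ℝ) := by
        rw [Real.sqrt_mul (by positivity), Real.sqrt_sq hlam, mul_comm]
  have hF2 := Real.sq_sqrt (by simpa using dotProduct_self_star_nonneg EA : 0 ≤ EA ⬝ᵥ EA)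
  have hF0 := Real.sqrt_nonneg (EA ⬝ᵥ EA)
  have hgram : (Ψ *ᵥ EA) ⬝ᵥ (Ψ *ᵥ EA) = EA ⬝ᵥ d - (Ψ *ᵥ EA) ⬝ᵥ (Ψ *ᵥ EB) := by
    rw [dotProduct_transpose_mulVec_mulVec, ← Set.indicator_self_add_compl (A : Set (Fin p)) E,
      mulVec_add, dotProduct_add]
    ring
  have hquad : (1 - δ) * √(EA ⬝ᵥ EA) ^ 2 ≤
      √(EA ⬝ᵥ EA) * (lam * √(#A : ℝ) + δ * √(EB ⬝ᵥ EB)) := by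
    have hlow := (h.bounds_of_support_subset hS hEA).1
    have hro := (abs_le.1 (h.abs_dotProduct_mulVec_le hS hEA hEB horth)).1
    have hcs := dotProduct_le_sqrt_mul_sqrt EA dA
    have := mul_le_mul_of_nonneg_left hdA_le hF0
    rw [hF2]
    nlinarith
  rcases hF0.eq_or_lt with hF | hF
  · rw [← hF, mul_zero]
    positivity
  · nlinarith

theorem dotProduct_self_le (h : HasRIP Ψ k δ) (hδ : 0 ≤ δ) (hS : #S ≤ k) (hS0 : S.Nonempty)
    (hδS : δ * (4 * √(#S : ℝ) + 1) ≤ 1) {E : Fin p → ℝ} (hE : ∀ i ∉ S, E i = 0)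
    {A : Finset (Fin p)} (hAS : A ⊆ S) {lam : ℝ} (hlam : 0 ≤ lam)
    (hdA : ∀ i ∈ A, |(Ψᵀ *ᵥ (Ψ *ᵥ E)) i| ≤ lam) (hEA : ∀ i ∉ A, |E i| ≤ 3 * lam) :
    E ⬝ᵥ E ≤ lam ^ 2 * (10 * #S + √(#S : ℝ) / 2 + 5 / 8) := by
  have hrestr := h.one_sub_mul_sqrt_indicator_le hδ hS hE A hlam hdA
  set EA := (A : Set (Fin p)).indicator E
  set EB := (A : Set (Fin p))ᶜ.indicator E
  have hEB : EB ⬝ᵥ EB ≤ #(S \ A) * (3 * lam) ^ 2 :=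
    dotProduct_self_le_of_support_subset
      (fun i hi => by
        by_cases hiA : i ∈ A
        · simp [EB, hiA]
        · simp [EB, hiA, hE i fun hiS => hi (mem_sdiff.2 ⟨hiS, hiA⟩)])
      fun i hi => by simpa [EB, (mem_sdiff.1 hi).2] using hEA i (mem_sdiff.1 hi).2
  have hsplit : E ⬝ᵥ E = EA ⬝ᵥ EA + EB ⬝ᵥ EB := by
    conv_lhs => rw [← Set.indicator_self_add_compl (A : Set (Fin p)) E]
    have horth : EA ⬝ᵥ EB = 0 :=
      sum_eq_zero fun i _ => by by_cases hi : i ∈ A <;> simp [EA, EB, hi]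
    rw [add_dotProduct, dotProduct_add, dotProduct_add, horth, dotProduct_comm EB EA, horth]
    ring
  have hcard : (#S : ℝ) = #A + #(S \ A) := by
    rw [← Nat.cast_add, add_comm, card_sdiff_add_card_eq_card hAS]
  have hnn (v : Fin p → ℝ) : 0 ≤ v ⬝ᵥ v := by simpa using dotProduct_self_star_nonneg v
  have hs := Real.sq_sqrt (Nat.cast_nonneg (α := ℝ) #S)
  have bound := sq_add_sq_le_of_one_sub_mul_le (Real.sqrt_nonneg (EA ⬝ᵥ EA))
    (Real.sqrt_nonneg (EB ⬝ᵥ EB)) (Real.sqrt_nonneg #(S \ A))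
    (Real.sqrt_pos.2 (by exact_mod_cast hS0.card_pos))
    (by rw [Real.sq_sqrt, Real.sq_sqrt, Real.sq_sqrt, hcard] <;> positivity) hlam hδS hrestr
    (by rw [Real.sq_sqrt (hnn EB), Real.sq_sqrt (Nat.cast_nonneg _)]; linarith)
  rwa [Real.sq_sqrt (hnn EA), Real.sq_sqrt (hnn EB), hs, ← hsplit] at bound

/-- Otherwise the error `x† - x` off `i` would exceed the bound of `HasRIP.dotProduct_self_le`. -/
theorem abs_lt_two_mul_of_abs_add_le (h : HasRIP Ψ (#S + 1) δ) (hδ0 : 0 < δ)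
    (hδS : δ * (4 * √(#S : ℝ) + 1) ≤ 1) {A : Finset (Fin p)} (hAS : A ⊂ S)
    {xdag x d : Fin p → ℝ} (hxdag : ∀ i ∉ S, xdag i = 0) (hx : ∀ i ∉ A, x i = 0)
    (hd : d = Ψᵀ *ᵥ (Ψ *ᵥ (xdag - x))) {lam : ℝ} (hlam : 0 < lam)
    (hdA : ∀ i ∈ A, |d i| ≤ lam) (hxdagA : ∀ i ∉ A, |xdag i| ≤ 3 * lam) {i : Fin p}
    (hi : |x i + d i| ≤ lam) : |xdag i| < 2 * lam := by
  by_contra! hlarge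
  set E := xdag - x
  have hE : ∀ j ∉ S, E j = 0 := fun j hj => by
    simp [E, hxdag j hj, hx j fun hjA => hj (hAS.subset hjA)]
  have hEA : ∀ j ∉ A, E j = xdag j := fun j hj => by simp [E, hx j hj]
  obtain ⟨j, hjS, hjA⟩ := exists_of_ssubset hAS
  have hS0 : S.Nonempty := ⟨j, hjS⟩
  set s := √(#S : ℝ)
  have hs2 : s ^ 2 = #S := Real.sq_sqrt (Nat.cast_nonneg _)
  have hs1 : 1 ≤ s := Real.one_le_sqrt.2 (by exact_mod_cast hS0.card_pos)
  have hδ1 : δ ≤ 1 := by nlinarith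
  obtain ⟨c, hc, hdi⟩ := h.exists_abs_transpose_mulVec_mulVec_sub_le (card_insert_le i S) hE
  rw [← hd] at hdi
  set R := √(Function.update E i 0 ⬝ᵥ Function.update E i 0)
  have hdi_le : |d i| ≤ lam := by
    by_cases hiA : i ∈ A
    · exact hdA i hiA
    · rwa [hx i hiA, zero_add] at hi
  have hR := lam_mul_one_sub_two_mul_le hδ0.le hδ1 hc hdi hlarge hi hdi_le
  have hRlow : lam * (4 * s - 1) ≤ R :=
    le_of_mul_le_mul_left (by nlinarith [mul_le_mul_of_nonneg_left hδS hlam.le]) hδ0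
  have hR2 : (lam * (4 * s - 1)) ^ 2 ≤ R ^ 2 :=
    pow_le_pow_left₀ (by nlinarith) hRlow 2
  have hup := h.dotProduct_self_le hδ0.le (Nat.le_succ _) hS0 hδS hE hAS.subset hlam.le
    (by rwa [hd] at hdA) fun j hj => by rw [hEA j hj]; exact hxdagA j hj
  have hnormR : Function.update E i 0 ⬝ᵥ Function.update E i 0 = R ^ 2 :=
    (Real.sq_sqrt (by simpa using dotProduct_self_star_nonneg (Function.update E i 0))).symm
  rw [dotProduct_self_eq_sq_add_update E i, hnormR, ← hs2, Real.sqrt_sq (by linarith)] at hup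
  have hlam2 := mul_pos hlam hlam
  -- `6s² - 17s/2 + 3/8 > 0` for `s ≥ √2`, and `6s² - 17s/2 + 35/8 > 0` for all `s`
  by_cases hiA : i ∈ A
  · have hs2' : 2 ≤ s ^ 2 := by
      have : 1 < #S := one_lt_card.2 ⟨i, hAS.subset hiA, j, hjS, fun hij => hjA (hij ▸ hiA)⟩
      rw [hs2]; exact_mod_cast this
    nlinarith [sq_nonneg (E i), mul_nonneg hlam2.le (sq_nonneg (s - 17 / 10)),
      mul_nonneg hlam2.le (sub_nonneg.2 hs2')]
  · have hEi : 4 * lam ^ 2 ≤ E i ^ 2 := by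
      rw [hEA i hiA, ← sq_abs (xdag i)]
      nlinarith [mul_le_mul hlarge hlarge (by positivity) (abs_nonneg _)]
    nlinarith [mul_nonneg hlam2.le (sq_nonneg (s - 17 / 24))]

end HasRIP

/-- Claim 1b: if `J_{λ,3} ⊆ A ⊆ A†`, then either `J_{λ,2} ⊆ A`, or the
maximal value of `|x†_i|` outside the next active set `A'` is strictly smaller than the
maximal value of `|x†_i|` outside `A` (maxima taken in `ℝ≥0`, with the empty maximum `0`). -/
theorem stmt_15 {n p : ℕ} (Ψ : Matrix (Fin n) (Fin p) ℝ)
    (xdag : Fin p → ℝ) (Adag : Finset (Fin p))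
    (hAdag : Adag = Finset.univ.filter (fun i => xdag i ≠ 0))
    (T : ℕ) (hT : T = Adag.card)
    (y : Fin n → ℝ) (hy : y = Ψ *ᵥ xdag)
    (δ : ℝ) (hδ0 : 0 < δ) (hδ1 : δ < 1)
    (hRIP : HasRIP Ψ (T + 1) δ)
    (hAss1 : δ ≤ 1 / (4 * Real.sqrt T + 1))
    (lam : ℝ) (hlam : 0 < lam)
    (A : Finset (Fin p)) (hA : A ⊆ Adag)
    (hJ3 : Finset.univ.filter (fun i => 3 * lam ≤ |xdag i|) ⊆ A)
    (d x : Fin p → ℝ)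
    (hdA : ∀ i ∈ A, |d i| = lam)
    (hxI : ∀ i ∉ A, x i = 0)
    (hxA : (fun j : {i // i ∈ A} => x j.1) =
      ((colSub Ψ A)ᵀ * colSub Ψ A)⁻¹ *ᵥ ((colSub Ψ A)ᵀ *ᵥ y - fun j => d j.1))
    (hdI : ∀ i ∉ A, d i = (Ψᵀ *ᵥ (y - colSub Ψ A *ᵥ fun j => x j.1)) i)
 :
    Finset.univ.filter (fun i => 2 * lam ≤ |xdag i|) ⊆ A ∨
      (Finset.univ.filter (fun i => lam < |x i + d i|))ᶜ.sup (fun i => Real.nnabs (xdag i)) <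
        Aᶜ.sup (fun i => Real.nnabs (xdag i)) := by
  rw [or_iff_not_imp_left]
  intro hJ2
  obtain ⟨i₀, hi₀, hi₀A⟩ := not_subset.1 hJ2
  replace hi₀ : 2 * lam ≤ |xdag i₀| := (mem_filter.1 hi₀).2
  have hxdag : ∀ i ∉ Adag, xdag i = 0 := fun i hi => by simpa [hAdag] using hi
  have hAAdag : A ⊂ Adag := by
    refine ⟨hA, fun h => hi₀A (h (by_contra fun hi => ?_))⟩
    rw [hxdag i₀ hi, abs_zero] at hi₀
    linarith
  subst hT
  have hd : d = Ψᵀ *ᵥ (Ψ *ᵥ (xdag - x)) := by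
    rw [eq_transpose_mulVec_residual (hRIP.isUnit_det_gram hδ1 ((card_le_card hA).trans
      (Nat.le_succ _))) hxI hxA hdI, hy, ← mulVec_sub]
  have hδS : δ * (4 * √(#Adag : ℝ) + 1) ≤ 1 := by
    rwa [← le_div_iff₀ (by positivity)]
  have hJ3' : ∀ i ∉ A, |xdag i| ≤ 3 * lam := fun i hi =>
    (not_le.1 fun h => hi (hJ3 (mem_filter.2 ⟨mem_univ i, h⟩))).le
  have hsmall (i : Fin p) (hi : |x i + d i| ≤ lam) : |xdag i| < 2 * lam :=
    hRIP.abs_lt_two_mul_of_abs_add_le hδ0 hδS hAAdag hxdag hxI hd hlam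
      (fun i hi => (hdA i hi).le) hJ3' hi
  have hle : Real.nnabs (xdag i₀) ≤ Aᶜ.sup fun i => Real.nnabs (xdag i) :=
    le_sup (f := fun i => Real.nnabs (xdag i)) (mem_compl.2 hi₀A)
  refine (Finset.sup_lt_iff (lt_of_lt_of_le ?_ hle)).2 fun i hi => lt_of_lt_of_le ?_ hle
  · rw [bot_eq_zero, ← NNReal.coe_pos, Real.coe_nnabs]
    linarith
  · rw [← NNReal.coe_lt_coe, Real.coe_nnabs, Real.coe_nnabs]
    refine (hsmall i ?_).trans_le hi₀
    simpa using hi
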